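/- For every integer d ≥ 2 there exists a constant δ > 0 (depending only on d) such that for every integer k with 1 ≤ k < d, every axis-aligned d-dimensional cube C in ℝ^d, every integer s ≥ 1, and the subdivision of C into s^d congruent axis-aligned subcubes, every k-flat intersects at most δ · s^k of the subcubes. -/

import Mathlib

open scoped Classical

noncomputable section

/-- Points of `d`-dimensional Euclidean space. -/
abbrev Pt (d : ℕ) : Type := EuclideanSpace ℝ (Fin d)

/-- Closed axis-aligned cube with lower corner `a` and side length `ℓ`. -/
def closedCube {d : ℕ} (a : Fin d → ℝ) (ℓ : ℝ) : Set (Pt d) :=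
  {x | ∀ i, a i ≤ x i ∧ x i ≤ a i + ℓ}

/-- Interior of the axis-aligned cube with lower corner `a` and side length `ℓ`. -/
def openCube {d : ℕ} (a : Fin d → ℝ) (ℓ : ℝ) : Set (Pt d) :=
  {x | ∀ i, a i < x i ∧ x i < a i + ℓ}

/-- `P` is `b`-well-separated: every axis-aligned unit cube contains at most `b` points of `P`. -/
def WellSeparated {d : ℕ} (b : ℝ) (P : Finset (Pt d)) : Prop :=
  ∀ a : Fin d → ℝ, (((↑P : Set (Pt d)) ∩ closedCube a 1).ncard : ℝ) ≤ b

/-- `P` is `b`-homogeneous: it lies in the interior of an axis-aligned cube of volume `|P|`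
and every axis-aligned unit cube contains at most `b` of its points. -/
def IsHomogeneous {d : ℕ} (b : ℝ) (P : Finset (Pt d)) : Prop :=
  (∃ a : Fin d → ℝ, (↑P : Set (Pt d)) ⊆ openCube a ((P.card : ℝ) ^ (1 / (d : ℝ)))) ∧
    WellSeparated b P

/-- `F` is a `k`-flat: a `k`-dimensional affine subspace. -/
def IsKFlat {d : ℕ} (k : ℕ) (F : AffineSubspace ℝ (Pt d)) : Prop :=
  (F : Set (Pt d)).Nonempty ∧ Module.finrank ℝ F.direction = k

/-- `F` is `m`-rich with respect to `P`: it contains at least `m` points of `P`. -/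
def IsRich {d : ℕ} (m : ℕ) (P : Finset (Pt d)) (F : AffineSubspace ℝ (Pt d)) : Prop :=
  m ≤ ((↑P : Set (Pt d)) ∩ (F : Set (Pt d))).ncard

/-- The number of distinct distances measured from `p` to the other points of `P`. -/
def distinctDists {d : ℕ} (P : Finset (Pt d)) (p : Pt d) : ℕ :=
  {r : ℝ | ∃ q ∈ P, q ≠ p ∧ dist p q = r}.ncard

/-- The (closed) subcube indexed by `ι` in the subdivision of the cube with corner `a`
and side `ℓ` into `s^d` congruent subcubes. -/
def subcube {d : ℕ} (a : Fin d → ℝ) (ℓ : ℝ) (s : ℕ) (ι : Fin d → Fin s) : Set (Pt d) :=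
  closedCube (fun i => a i + (ι i : ℝ) * (ℓ / s)) (ℓ / s)

/-- The interior of the subcube indexed by `ι`. -/
def openSubcube {d : ℕ} (a : Fin d → ℝ) (ℓ : ℝ) (s : ℕ) (ι : Fin d → Fin s) : Set (Pt d) :=
  openCube (fun i => a i + (ι i : ℝ) * (ℓ / s)) (ℓ / s)

/-! The coordinate functionals restricted to a `k`-dimensional subspace `V ≤ ℝ^d` span its dual.
Among them pick `k` spanning a parallelotope of maximal volume: by Cramer's rule every coordinate
functional is then a combination of the chosen ones with coefficients in `[-1, 1]`, so
`|v i| ≤ ∑ₐ |v (e a)|` on `V`. Consequently two subcubes met by a `k`-flat that agree in the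
`k` chosen indices differ by at most `k + 1` in every index, and the subcubes met by the flat fall
into at most `s^k` classes of at most `(2k + 3)^d` subcubes each. -/

open Module

theorem exists_basis_comp_repr_abs_le_one {K W ι : Type*} [Field K] [LinearOrder K]
    [IsStrictOrderedRing K] [AddCommGroup W] [Module K W] [FiniteDimensional K W] [Finite ι]
    {n : ℕ} (hn : finrank K W = n) {f : ι → W} (hf : Submodule.span K (Set.range f) = ⊤) :
    ∃ (e : Fin n → ι) (b : Basis (Fin n) K W),
      ⇑b = f ∘ e ∧ ∀ i a, |b.repr (f i) a| ≤ 1 := by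
  let b₀ := finBasisOfFinrankEq K W hn
  have hne : ∃ e : Fin n → ι, b₀.det (f ∘ e) ≠ 0 := by
    obtain ⟨κ, g, -, hspan, hli⟩ := exists_linearIndependent' K f
    let σ := (Basis.mk hli (hspan.trans hf).ge).indexEquiv b₀
    refine ⟨g ∘ σ.symm, (b₀.is_basis_iff_det.mp ⟨hli.comp _ σ.symm.injective, ?_⟩).ne_zero⟩
    rwa [σ.symm.surjective.range_comp, hspan]
  obtain ⟨e₀, he₀⟩ := hne
  have : Nonempty (Fin n → ι) := ⟨e₀⟩
  obtain ⟨e, he⟩ := Finite.exists_max fun e : Fin n → ι => |b₀.det (f ∘ e)|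
  have hdet : b₀.det (f ∘ e) ≠ 0 := by
    intro h
    have := he e₀
    rw [h, abs_zero, abs_nonpos_iff] at this
    exact he₀ this
  obtain ⟨hli, hspan⟩ := b₀.is_basis_iff_det.mpr (Ne.isUnit hdet)
  refine ⟨e, Basis.mk hli hspan.ge, Basis.coe_mk _ _, fun i a => ?_⟩
  have hcramer := congrArg (· (f i)) (b₀.det_smul_mk_coord_eq_det_update hli hspan.ge a)
  simp only [LinearMap.smul_apply, Basis.coord_apply, smul_eq_mul,
    MultilinearMap.toLinearMap_apply, AlternatingMap.coe_multilinearMap] at hcramer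
  rw [← Function.comp_update] at hcramer
  have := he (Function.update e a i)
  rw [← hcramer, abs_mul] at this
  exact (mul_le_iff_le_one_right (abs_pos.mpr hdet)).mp this

theorem Submodule.exists_abs_apply_le_sum_abs_apply {ι : Type*} [Finite ι]
    {V : Submodule ℝ (EuclideanSpace ℝ ι)} {k : ℕ} (hV : finrank ℝ V = k) :
    ∃ e : Fin k → ι, ∀ v ∈ V, ∀ i, |v i| ≤ ∑ a, |v (e a)| := by
  let coord : ι → Dual ℝ V := fun i => (EuclideanSpace.proj i).toLinearMap ∘ₗ V.subtype
  have hspan : span ℝ (Set.range coord) = ⊤ := by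
    rw [← Subspace.dualCoannihilator_dualAnnihilator_eq (W := span ℝ (Set.range coord)),
      dualAnnihilator_eq_top_iff, eq_bot_iff]
    intro v hv
    rw [← SetLike.mem_coe, coe_dualCoannihilator_span] at hv
    ext i
    simpa [coord] using hv _ ⟨i, rfl⟩
  obtain ⟨e, b, hb, hrepr⟩ :=
    exists_basis_comp_repr_abs_le_one (Subspace.dual_finrank_eq.trans hV) hspan
  refine ⟨e, fun v hv i => ?_⟩
  have hsum : v i = ∑ a, b.repr (coord i) a * v (e a) := by
    simpa [hb, coord] using (congrArg (· ⟨v, hv⟩) (b.sum_repr (coord i))).symm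
  calc |v i| = |∑ a, b.repr (coord i) a * v (e a)| := by rw [← hsum]
    _ ≤ ∑ a, |b.repr (coord i) a| * |v (e a)| :=
      (Finset.abs_sum_le_sum_abs _ _).trans_eq (by simp only [abs_mul])
    _ ≤ ∑ a, |v (e a)| := by
      gcongr with a
      exact mul_le_of_le_one_left (abs_nonneg _) (hrepr i a)

theorem Fin.card_filter_abs_sub_le {s : ℕ} (j₀ : Fin s) (r : ℕ) :
    (Finset.univ.filter fun j : Fin s => |((j : ℕ) : ℤ) - (j₀ : ℕ)| ≤ r).card ≤ 2 * r + 1 := by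
  calc _ ≤ (Finset.Icc ((j₀ : ℕ) - r : ℤ) ((j₀ : ℕ) + r)).card := by
        refine Finset.card_le_card_of_injOn (fun j => ((j : ℕ) : ℤ)) (fun j hj => ?_)
          (fun j _ j' _ h => Fin.ext (Nat.cast_injective h))
        simp only [Finset.coe_filter, Finset.mem_univ, true_and, Set.mem_ofPred_eq] at hj
        simp only [Finset.coe_Icc, Set.mem_Icc]
        constructor <;> linarith [abs_le.mp hj]
    _ = 2 * r + 1 := by rw [Int.card_Icc]; omega

theorem card_le_of_abs_sub_le_of_comp_eq {m n : Type*} [Fintype m] [Fintype n]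
    {s r : ℕ} (e : m → n) (T : Finset (n → Fin s))
    (hT : ∀ ι ∈ T, ∀ ι' ∈ T, ι ∘ e = ι' ∘ e → ∀ i, |((ι i : ℕ) : ℤ) - (ι' i : ℕ)| ≤ r) :
    T.card ≤ (2 * r + 1) ^ Fintype.card n * s ^ Fintype.card m := by
  calc T.card ≤ (2 * r + 1) ^ Fintype.card n * (T.image (· ∘ e)).card := by
        refine Finset.card_le_mul_card_image _ _ fun σ hσ => ?_
        obtain ⟨ι₀, hι₀, rfl⟩ := Finset.mem_image.mp hσ
        calc _ ≤ (Fintype.piFinset fun i => Finset.univ.filter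
                fun j : Fin s => |((j : ℕ) : ℤ) - (ι₀ i : ℕ)| ≤ r).card := by
              refine Finset.card_le_card fun ι hι => ?_
              obtain ⟨hιT, hιe⟩ := Finset.mem_filter.mp hι
              simpa using hT ι hιT ι₀ hι₀ hιe
          _ ≤ (2 * r + 1) ^ Fintype.card n := by
              rw [Fintype.card_piFinset]
              exact Finset.prod_le_pow_card _ _ _ fun i _ => Fin.card_filter_abs_sub_le _ _
    _ ≤ (2 * r + 1) ^ Fintype.card n * s ^ Fintype.card m := by
        gcongr
        simpa using Finset.card_le_univ (T.image (· ∘ e))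

theorem abs_sub_le_of_mem_subcube {d s : ℕ} {a : Fin d → ℝ} {ℓ : ℝ} {ι ι' : Fin d → Fin s}
    {x y : Pt d} (hx : x ∈ subcube a ℓ s ι) (hy : y ∈ subcube a ℓ s ι') {j : Fin d}
    (hj : ι j = ι' j) : |x j - y j| ≤ ℓ / s := by
  have hxj := hx j
  have hyj := hy j
  simp only [hj] at hxj
  rw [abs_sub_le_iff]
  constructor <;> linarith [hxj.1, hxj.2, hyj.1, hyj.2]

theorem abs_index_sub_le_of_mem_subcube {d s : ℕ} {a : Fin d → ℝ} {ℓ : ℝ} (hℓ : 0 < ℓ)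
    {ι ι' : Fin d → Fin s} {x y : Pt d} (hx : x ∈ subcube a ℓ s ι) (hy : y ∈ subcube a ℓ s ι')
    {i : Fin d} {r : ℕ} (hxy : |x i - y i| ≤ r * (ℓ / s)) :
    |((ι i : ℕ) : ℤ) - (ι' i : ℕ)| ≤ r + 1 := by
  have hu : 0 < ℓ / s := div_pos hℓ (Nat.cast_pos.mpr (ι i).pos)
  have hxi := hx i
  have hyi := hy i
  have hreal : |(ι i : ℝ) - ι' i| * (ℓ / s) ≤ (r + 1) * (ℓ / s) := by
    rw [← abs_of_pos hu, ← abs_mul, abs_of_pos hu, abs_le]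
    constructor <;> nlinarith [abs_le.mp hxy, hxi.1, hxi.2, hyi.1, hyi.2]
  exact_mod_cast le_of_mul_le_mul_right hreal hu

theorem abs_index_sub_le_of_meets_flat {d k s : ℕ} {a : Fin d → ℝ} {ℓ : ℝ} (hℓ : 0 < ℓ)
    {F : AffineSubspace ℝ (Pt d)} {e : Fin k → Fin d}
    (he : ∀ v ∈ F.direction, ∀ i, |v i| ≤ ∑ a, |v (e a)|) {ι ι' : Fin d → Fin s}
    (hι : ((F : Set (Pt d)) ∩ subcube a ℓ s ι).Nonempty)
    (hι' : ((F : Set (Pt d)) ∩ subcube a ℓ s ι').Nonempty) (hιe : ι ∘ e = ι' ∘ e) (i : Fin d) :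
    |((ι i : ℕ) : ℤ) - (ι' i : ℕ)| ≤ k + 1 := by
  obtain ⟨x, hxF, hx⟩ := hι
  obtain ⟨y, hyF, hy⟩ := hι'
  refine abs_index_sub_le_of_mem_subcube hℓ hx hy ?_
  calc |x i - y i| ≤ ∑ a, |x (e a) - y (e a)| := by
        simpa using he _ (AffineSubspace.vsub_mem_direction hxF hyF) i
    _ ≤ ∑ _a : Fin k, ℓ / s :=
        Finset.sum_le_sum fun b _ => abs_sub_le_of_mem_subcube hx hy (congrFun hιe b)
    _ = k * (ℓ / s) := by simp

theorem kflat_meets_few_subcubes_general (d : ℕ) :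
    ∃ δ : ℝ, 0 < δ ∧
      ∀ k : ℕ, 1 ≤ k → k < d →
        ∀ (a : Fin d → ℝ) (ℓ : ℝ), 0 < ℓ →
          ∀ s : ℕ, 1 ≤ s →
            ∀ F : AffineSubspace ℝ (Pt d), IsKFlat k F →
              ({ι : Fin d → Fin s |
                  ((F : Set (Pt d)) ∩ subcube a ℓ s ι).Nonempty}.ncard : ℝ) ≤
                δ * (s : ℝ) ^ k := by
  refine ⟨(2 * d + 1) ^ d, by positivity, ?_⟩
  rintro k - hkd a ℓ hℓ s - F ⟨-, hk⟩
  obtain ⟨e, he⟩ := Submodule.exists_abs_apply_le_sum_abs_apply hk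
  have hcard := card_le_of_abs_sub_le_of_comp_eq e
    {ι : Fin d → Fin s | ((F : Set (Pt d)) ∩ subcube a ℓ s ι).Nonempty}.toFinset
    fun ι hι ι' hι' hιe => by
      simp only [Set.mem_toFinset, Set.mem_ofPred_eq] at hι hι'
      exact_mod_cast abs_index_sub_le_of_meets_flat hℓ he hι hι' hιe
  simp only [Fintype.card_fin] at hcard
  rw [Set.ncard_eq_toFinset_card']
  exact_mod_cast hcard.trans (by gcongr; omega)

/-- In the subdivision of a cube into `s^d` congruent subcubes, every `k`-flat
(`1 ≤ k < d`) intersects at most `δ · s^k` of the subcubes, with `δ` depending only on `d`. -/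
theorem kflat_meets_few_subcubes (d : ℕ) (hd : 2 ≤ d) :
    ∃ δ : ℝ, 0 < δ ∧
      ∀ k : ℕ, 1 ≤ k → k < d →
        ∀ (a : Fin d → ℝ) (ℓ : ℝ), 0 < ℓ →
          ∀ s : ℕ, 1 ≤ s →
            ∀ F : AffineSubspace ℝ (Pt d), IsKFlat k F →
              ({ι : Fin d → Fin s |
                  ((F : Set (Pt d)) ∩ subcube a ℓ s ι).Nonempty}.ncard : ℝ) ≤
                δ * (s : ℝ) ^ k :=
  kflat_meets_few_subcubes_general d
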